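/- Let a ∈ ℂ∖{0} and b ∈ ℂ. Set R := min{|a|^{−1/2}, 2|b|^{−1}} (interpreted as |a|^{−1/2} when b = 0). Then (1) the set {z ∈ ℂ : |az² + bz| ≤ 1} is contained in B₀(R) ∪ B_{−b/a}(R), the union of the closed balls of radius R centered at 0 and at −b/a; and (2) its Lebesgue measure satisfies vol{z ∈ ℂ : |az² + bz| ≤ 1} ≪ R² ≪ min{|a|^{−1}, |b|^{−2}}, with absolute implied constants (the quantity |b|^{−2} being interpreted as +∞ when b = 0). -/

import Mathlib

/-!
Since `a z² + b z = a z (z + b / a)`, a point `z` outside both balls of radius `R` satisfies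
`‖a z² + b z‖ = ‖a‖ x y` with `x = ‖z‖ > R` and `y = ‖z + b / a‖ > R`. If `R = ‖a‖^{-1/2}` this
exceeds `‖a‖ R² = 1`. Otherwise `R = 2 / ‖b‖` and `‖a‖ R² ≤ 1`; now `(x - R)(y - R) > 0` and
`x + y ≥ ‖b / a‖` give `‖a‖ x y > R ‖b‖ - ‖a‖ R² ≥ 1`. The area bound is that of two discs.
-/

noncomputable section

namespace Paper

open Classical in
/-- `R = min{|a|^{-1/2}, 2|b|^{-1}}`, interpreted as `|a|^{-1/2}` when `b = 0`. -/
def R13 (a b : ℂ) : ℝ :=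
  if b = 0 then (Real.sqrt (‖a‖))⁻¹
  else min ((Real.sqrt (‖a‖))⁻¹) (2 / ‖b‖)

open Metric MeasureTheory Real

theorem _root_.Complex.volume_real_closedBall (x : ℂ) {r : ℝ} (hr : 0 ≤ r) :
    volume.real (closedBall x r) = π * r ^ 2 := by
  simp [measureReal_def, Complex.volume_closedBall, ENNReal.toReal_ofReal hr, mul_comm]

theorem volume_real_le_of_subset_closedBall_union {s : Set ℂ} {x y : ℂ} {r : ℝ} (hr : 0 ≤ r)
    (hs : s ⊆ closedBall x r ∪ closedBall y r) : volume.real s ≤ 2 * π * r ^ 2 := by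
  calc volume.real s ≤ volume.real (closedBall x r ∪ closedBall y r) := measureReal_mono hs
        (isBounded_closedBall.union isBounded_closedBall).measure_lt_top.ne
    _ ≤ volume.real (closedBall x r) + volume.real (closedBall y r) := measureReal_union_le _ _
    _ = 2 * π * r ^ 2 := by
      rw [Complex.volume_real_closedBall x hr, Complex.volume_real_closedBall y hr]; ring

theorem norm_mul_sq_add_mul (a b z : ℂ) (ha : a ≠ 0) :
    ‖a * z ^ 2 + b * z‖ = ‖a‖ * (‖z‖ * ‖z - -b / a‖) := by
  rw [show a * z ^ 2 + b * z = a * (z * (z - -b / a)) by field_simp; ring, norm_mul, norm_mul]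

theorem setOf_norm_le_one_subset_closedBall_union {a b : ℂ} (ha : a ≠ 0) {r : ℝ} (hr : 0 ≤ r)
    (h : 1 ≤ ‖a‖ * r ^ 2 ∨ 1 ≤ r * ‖b‖ - ‖a‖ * r ^ 2) :
    {z : ℂ | ‖a * z ^ 2 + b * z‖ ≤ 1} ⊆ closedBall 0 r ∪ closedBall (-b / a) r := by
  intro z hz
  contrapose! hz
  simp only [Set.mem_union, mem_closedBall, dist_eq_norm, sub_zero, not_or, not_le] at hz
  obtain ⟨hx, hy⟩ := hz
  have ha' : 0 < ‖a‖ := norm_pos_iff.mpr ha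
  have hb : ‖b‖ ≤ ‖a‖ * (‖z‖ + ‖z - -b / a‖) := by
    have := norm_sub_le (z - -b / a) z
    rw [show z - -b / a - z = b / a by ring, norm_div, div_le_iff₀ ha'] at this
    linarith
  rw [Set.mem_ofPred_eq, not_le, norm_mul_sq_add_mul a b z ha]
  rcases h with h | h
  · linarith [mul_lt_mul_of_pos_left (mul_lt_mul'' hx hy hr hr) ha']
  · nlinarith [mul_pos ha' (mul_pos (sub_pos.2 hx) (sub_pos.2 hy)),
      mul_le_mul_of_nonneg_left hb hr]

section R13

variable {a : ℂ} (b : ℂ)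

theorem R13_pos (ha : a ≠ 0) : 0 < R13 a b := by
  have := norm_pos_iff.mpr ha
  unfold R13
  split_ifs with hb
  · positivity
  · have := norm_pos_iff.mpr hb
    positivity

theorem R13_le_inv_sqrt : R13 a b ≤ (√‖a‖)⁻¹ := by
  unfold R13
  split_ifs
  exacts [le_rfl, min_le_left _ _]

theorem R13_le_two_div {b : ℂ} (hb : b ≠ 0) : R13 a b ≤ 2 / ‖b‖ := by
  simp only [R13, hb, if_false, min_le_right]

theorem R13_eq_or : R13 a b = (√‖a‖)⁻¹ ∨ R13 a b * ‖b‖ = 2 := by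
  unfold R13
  split_ifs with hb
  · exact .inl rfl
  · refine (min_choice _ _).imp id fun h => ?_
    rw [h, div_mul_cancel₀ _ (norm_ne_zero_iff.mpr hb)]

theorem norm_mul_R13_sq_le_one (ha : a ≠ 0) : ‖a‖ * R13 a b ^ 2 ≤ 1 := by
  have ha' := norm_pos_iff.mpr ha
  calc ‖a‖ * R13 a b ^ 2 ≤ ‖a‖ * ((√‖a‖)⁻¹) ^ 2 := by
        gcongr
        exacts [(R13_pos b ha).le, R13_le_inv_sqrt b]
    _ = 1 := by rw [inv_pow, Real.sq_sqrt ha'.le, mul_inv_cancel₀ ha'.ne']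

theorem one_le_norm_mul_R13_sq_or (ha : a ≠ 0) :
    1 ≤ ‖a‖ * R13 a b ^ 2 ∨ 1 ≤ R13 a b * ‖b‖ - ‖a‖ * R13 a b ^ 2 := by
  have hle := norm_mul_R13_sq_le_one b ha
  rcases R13_eq_or b with h | h
  · left
    rw [h, inv_pow, Real.sq_sqrt (norm_nonneg a), mul_inv_cancel₀ (norm_ne_zero_iff.mpr ha)]
  · right
    linarith

end R13

theorem statement13 :
    ∃ c : ℝ, 0 < c ∧ ∀ a b : ℂ, a ≠ 0 →
      ({z : ℂ | ‖a * z ^ 2 + b * z‖ ≤ 1} ⊆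
          Metric.closedBall 0 (R13 a b) ∪ Metric.closedBall (-b / a) (R13 a b)) ∧
      (MeasureTheory.volume {z : ℂ | ‖a * z ^ 2 + b * z‖ ≤ 1}).toReal
          ≤ c * R13 a b ^ 2 ∧
      R13 a b ^ 2 ≤ c * (‖a‖)⁻¹ ∧
      (b ≠ 0 → R13 a b ^ 2 ≤ c * ((‖b‖) ^ 2)⁻¹) := by
  refine ⟨8, by norm_num, fun a b ha => ?_⟩
  have hR := R13_pos b ha
  have hsub := setOf_norm_le_one_subset_closedBall_union ha hR.le (one_le_norm_mul_R13_sq_or b ha)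
  refine ⟨hsub, ?_, ?_, fun hb => ?_⟩
  · calc volume.real _ ≤ 2 * π * R13 a b ^ 2 :=
          volume_real_le_of_subset_closedBall_union hR.le hsub
      _ ≤ 8 * R13 a b ^ 2 := by gcongr; linarith [pi_lt_four]
  · have := norm_mul_R13_sq_le_one b ha
    have ha' := norm_pos_iff.mpr ha
    rw [← div_eq_mul_inv, le_div_iff₀ ha']
    nlinarith
  · calc R13 a b ^ 2 ≤ (2 / ‖b‖) ^ 2 := by gcongr; exact R13_le_two_div hb
      _ = 4 * (‖b‖ ^ 2)⁻¹ := by ring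
      _ ≤ 8 * (‖b‖ ^ 2)⁻¹ := by gcongr; norm_num

end Paper
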